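/- arXiv:1210.7976 — 3 statements merged into one kernel-verified Lean document; each statement's English description precedes it below -/
import Mathlib

section
/- Let w_1, …, w_d be nonzero vectors with w_i ∈ V_i, and for each i let v_i ∈ V_i be such that {w_i, v_i} is linearly independent. Then for any nonzero scalars λ_1, …, λ_d, the tensor T = λ_1 (v_1 ⊗ w_2 ⊗ ⋯ ⊗ w_d) + λ_2 (w_1 ⊗ v_2 ⊗ w_3 ⊗ ⋯ ⊗ w_d) + ⋯ + λ_d (w_1 ⊗ ⋯ ⊗ w_{d-1} ⊗ v_d) has tensor rank exactly d. -/
open scoped TensorProduct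
open PiTensorProduct

noncomputable def tensorRank {ι : Type*} [Fintype ι] {K : Type*} [Field K]
    {V : ι → Type*} [∀ i, AddCommGroup (V i)] [∀ i, Module K (V i)]
    (T : ⨂[K] i, V i) : ℕ :=
  sInf {r | ∃ v : Fin r → Π i, V i, T = ∑ k, ⨂ₜ[K] i, v k i}

/-!
The lower bound is the substitution method. For a functional `f` on `V i₀`, replacing the
`i₀`-th factor by `x ↦ f x • w i₀` is a linear map of the tensor space. If `f` kills `w i₀` but
not `v i₀`, it sends the tangent vector to a nonzero multiple of `⨂ w`, so some summand `a k` of a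
decomposition has `f (a k i₀) ≠ 0`. Choosing instead `f` with `f (w i₀) = 1` and `f (a k i₀) = 0`
removes that summand, and sends the tangent vector to one with the `i₀`-th term traded for a
multiple of `⨂ w`. Allowing such a multiple `c • ⨂ w` in the induction, each step drops one term
on both sides.
-/

open Function Module Finset

theorem Submodule.exists_dual_apply_ne_zero_of_notMem_span_singleton {K W : Type*} [Field K]
    [AddCommGroup W] [Module K W] {x y : W} (h : x ∉ K ∙ y) :
    ∃ f : Dual K W, f x ≠ 0 ∧ f y = 0 := by
  obtain ⟨f, hfx, hf⟩ := Submodule.exists_dual_map_eq_bot_of_notMem h inferInstance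
  have hfy : f y ∈ (K ∙ y).map f := Submodule.mem_map_of_mem (Submodule.mem_span_singleton_self y)
  exact ⟨f, hfx, by rwa [hf, Submodule.mem_bot] at hfy⟩

section

variable {K : Type*} [Field K] {ι : Type*} {V : ι → Type*} [∀ i, AddCommGroup (V i)]
  [∀ i, Module K (V i)]

theorem PiTensorProduct.tprod_ne_zero [Fintype ι] {x : Π i, V i} (hx : ∀ i, x i ≠ 0) :
    (⨂ₜ[K] i, x i) ≠ 0 := by
  choose φ hφ using fun i => Projective.exists_dual_eq_one K (hx i)
  intro h
  have := congrArg (dualDistrib (⨂ₜ[K] i, φ i)) h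
  simp [dualDistrib_apply, hφ] at this

theorem exists_fin_card_sum_tprod_eq {κ : Type*} [Fintype κ] (a : κ → Π i, V i) :
    ∃ b : Fin (Fintype.card κ) → Π i, V i, ∑ k, (⨂ₜ[K] i, a k i) = ∑ k, ⨂ₜ[K] i, b k i :=
  ⟨_, (Fintype.sum_equiv (Fintype.equivFin κ).symm _ _ fun _ => rfl).symm⟩

variable [DecidableEq ι]

theorem PiTensorProduct.map_update_id_smulRight_tprod (i₀ : ι) (f : Dual K (V i₀)) (y : V i₀)
    (x : Π i, V i) :
    map (update (fun _ => LinearMap.id) i₀ (f.smulRight y)) (⨂ₜ[K] i, x i) =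
      f (x i₀) • ⨂ₜ[K] i, update x i₀ y i := by
  rw [map_tprod, ← MultilinearMap.map_update_smul]
  congr 1
  ext j
  rcases eq_or_ne j i₀ with rfl | hj
  · simp
  · simp [hj]

theorem PiTensorProduct.map_update_id_smulRight_tangent {i₀ : ι} {S : Finset ι} (hi₀ : i₀ ∉ S)
    (f : Dual K (V i₀)) (c : K) (w v : Π i, V i) :
    map (update (fun _ => LinearMap.id) i₀ (f.smulRight (w i₀)))
        (c • (⨂ₜ[K] i, w i) + ∑ i ∈ insert i₀ S, ⨂ₜ[K] j, update w i (v i) j) =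
      (c * f (w i₀) + f (v i₀)) • (⨂ₜ[K] i, w i) +
        f (w i₀) • ∑ i ∈ S, ⨂ₜ[K] j, update w i (v i) j := by
  have hS : ∀ i ∈ S, update (update w i (v i)) i₀ (w i₀) = update w i (v i) := fun i hi =>
    update_eq_self_iff.mpr (update_of_ne (ne_of_mem_of_not_mem hi hi₀).symm _ _).symm
  simp only [map_add, map_smul, map_sum, sum_insert hi₀, map_update_id_smulRight_tprod,
    update_self, update_idem, update_eq_self]
  rw [sum_congr rfl fun i hi => by rw [update_of_ne (ne_of_mem_of_not_mem hi hi₀).symm, hS i hi],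
    ← smul_sum]
  module

end

section

variable {K : Type*} [Field K] {ι : Type*} [Fintype ι] [DecidableEq ι] {V : ι → Type*}
  [∀ i, AddCommGroup (V i)] [∀ i, Module K (V i)]

theorem card_le_of_smul_tprod_add_sum_eq {w v : Π i, V i} (hw : ∀ i, w i ≠ 0) (S : Finset ι)
    (hv : ∀ i ∈ S, v i ∉ K ∙ w i) (c : K) {r : ℕ} (a : Fin r → Π i, V i)
    (h : c • (⨂ₜ[K] i, w i) + ∑ i ∈ S, (⨂ₜ[K] j, update w i (v i) j) = ∑ k, ⨂ₜ[K] i, a k i) :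
    S.card ≤ r := by
  induction S using Finset.induction_on generalizing c r with
  | empty => simp
  | insert i₀ S hi₀ ih =>
  obtain ⟨f₁, hf₁v, hf₁w⟩ :=
    Submodule.exists_dual_apply_ne_zero_of_notMem_span_singleton (hv i₀ (mem_insert_self i₀ S))
  obtain ⟨k₀, hk₀⟩ : ∃ k, f₁ (a k i₀) ≠ 0 := by
    by_contra! hall
    have h₁ := congrArg (map (update (fun _ => LinearMap.id) i₀ (f₁.smulRight (w i₀)))) h
    simp only [map_update_id_smulRight_tangent hi₀, hf₁w, map_sum, map_update_id_smulRight_tprod,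
      hall, mul_zero, zero_add, zero_smul, add_zero, sum_const_zero] at h₁
    exact smul_ne_zero hf₁v (tprod_ne_zero hw) h₁
  obtain ⟨φ, hφ⟩ := Projective.exists_dual_eq_one K (hw i₀)
  set f := φ - (φ (a k₀ i₀) / f₁ (a k₀ i₀)) • f₁
  have hfw : f (w i₀) = 1 := by simp [f, hφ, hf₁w]
  have hfa : f (a k₀ i₀) = 0 := by simp [f, hk₀]
  obtain ⟨r, rfl⟩ := Nat.exists_eq_add_one_of_ne_zero k₀.pos.ne'
  have h₂ := congrArg (map (update (fun _ => LinearMap.id) i₀ (f.smulRight (w i₀)))) h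
  rw [map_update_id_smulRight_tangent hi₀, hfw, mul_one, one_smul, map_sum,
    Fin.sum_univ_succAbove _ k₀, map_update_id_smulRight_tprod, hfa, zero_smul, zero_add] at h₂
  simp only [map_update_id_smulRight_tprod, ← MultilinearMap.map_update_smul] at h₂
  rw [card_insert_of_notMem hi₀]
  exact Nat.add_le_add_right (ih (fun i hi => hv i (mem_insert_of_mem hi)) _ _ h₂) 1

end

section

variable {K : Type*} [Field K] {ι : Type*} [Fintype ι] {V : ι → Type*} [∀ i, AddCommGroup (V i)]
  [∀ i, Module K (V i)]

theorem tensorRank_sum_tprod_le_card {κ : Type*} [Fintype κ] (a : κ → Π i, V i) :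
    tensorRank (∑ k, ⨂ₜ[K] i, a k i) ≤ Fintype.card κ :=
  Nat.sInf_le (exists_fin_card_sum_tprod_eq a)

theorem le_tensorRank {T : ⨂[K] i, V i} {n : ℕ}
    (hT : ∃ (r : ℕ) (a : Fin r → Π i, V i), T = ∑ k, ⨂ₜ[K] i, a k i)
    (h : ∀ r (a : Fin r → Π i, V i), T = ∑ k, (⨂ₜ[K] i, a k i) → n ≤ r) : n ≤ tensorRank T := by
  obtain ⟨a, ha⟩ := Nat.sInf_mem hT
  exact h _ a ha

end

theorem stmt2_general {ι K : Type*} [Fintype ι] [DecidableEq ι] [Field K]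
    {V : ι → Type*} [∀ i, AddCommGroup (V i)] [∀ i, Module K (V i)]
    (w v : Π i, V i) (hw : ∀ i, w i ≠ 0)
    (hind : ∀ i, LinearIndependent K ![w i, v i])
    (lam : ι → K) (hlam : ∀ i, lam i ≠ 0) :
    tensorRank (∑ i, lam i • ⨂ₜ[K] j, (if j = i then v j else w j)) = Fintype.card ι := by
  have hT : ∑ i, lam i • (⨂ₜ[K] j, (if j = i then v j else w j)) =
      ∑ i, ⨂ₜ[K] j, update w i (lam i • v i) j := by
    refine sum_congr rfl fun i _ => ?_
    rw [MultilinearMap.map_update_smul]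
    congr 2
    ext j
    rcases eq_or_ne j i with rfl | hj
    · simp
    · simp [hj]
  have hv : ∀ i, lam i • v i ∉ K ∙ w i := fun i => by
    rw [Submodule.smul_mem_iff _ (hlam i), Submodule.mem_span_singleton]
    rintro ⟨c, hc⟩
    exact (LinearIndependent.pair_iff' (hw i)).mp (hind i) c hc
  rw [hT]
  refine le_antisymm (tensorRank_sum_tprod_le_card _) (le_tensorRank ?_ fun r a ha => ?_)
  · exact ⟨_, exists_fin_card_sum_tprod_eq _⟩
  · simpa using card_le_of_smul_tprod_add_sum_eq hw univ (fun i _ => hv i) 0 a (by simpa using ha)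

/-- the general tangent vector to the Segre variety at
[w₁ ⊗ ⋯ ⊗ w_d] has tensor rank exactly d. -/
theorem stmt2 {ι K : Type*} [Fintype ι] [DecidableEq ι] [Field K] [IsAlgClosed K] [CharZero K]
    {V : ι → Type*} [∀ i, AddCommGroup (V i)] [∀ i, Module K (V i)]
    [∀ i, FiniteDimensional K (V i)]
    (w v : Π i, V i) (hw : ∀ i, w i ≠ 0)
    (hind : ∀ i, LinearIndependent K ![w i, v i])
    (lam : ι → K) (hlam : ∀ i, lam i ≠ 0) :
    tensorRank (∑ i, lam i • ⨂ₜ[K] j, (if j = i then v j else w j)) = Fintype.card ι :=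
  stmt2_general w v hw hind lam hlam
end

section
/- For d = 3: if w_i ∈ V_i are nonzero and v_i ∈ V_i with {w_i, v_i} linearly independent for i = 1, 2, 3, then T = v_1 ⊗ w_2 ⊗ w_3 + w_1 ⊗ v_2 ⊗ w_3 + w_1 ⊗ w_2 ⊗ v_3 has tensor rank exactly 3. -/
open scoped TensorProduct

noncomputable def tensorRank3 {K V₁ V₂ V₃ : Type*} [Field K]
    [AddCommGroup V₁] [Module K V₁] [AddCommGroup V₂] [Module K V₂]
    [AddCommGroup V₃] [Module K V₃]
    (T : V₁ ⊗[K] (V₂ ⊗[K] V₃)) : ℕ :=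
  sInf {r | ∃ (a : Fin r → V₁) (b : Fin r → V₂) (c : Fin r → V₃),
    T = ∑ k, a k ⊗ₜ[K] (b k ⊗ₜ[K] c k)}

/-- Auxiliary case of the scalar contradiction. -/
lemma scalarAux {K : Type*} [Field K]
    (x₁ x₂ x'₁ x'₂ y₁ y₂ y'₁ y'₂ z₁ z₂ z'₁ z'₂ : K)
    (hx₂ : x₂ ≠ 0)
    (hDy : y₁ * y'₂ - y'₁ * y₂ ≠ 0) (hDz : z₁ * z'₂ - z'₁ * z₂ ≠ 0)
    (hx'₂ : x'₂ = 0)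
    (e2 : x'₁ * (y₁ * z₁) + x'₂ * (y₂ * z₂) = 1)
    (e5 : x'₁ * (y'₁ * z₁) + x'₂ * (y'₂ * z₂) = 0)
    (e6 : x'₁ * (y₁ * z'₁) + x'₂ * (y₂ * z'₂) = 0)
    (e7 : x₁ * (y'₁ * z'₁) + x₂ * (y'₂ * z'₂) = 0) : False := by
  have h2 : x'₁ * (y₁ * z₁) = 1 := by linear_combination e2 - (y₂ * z₂) * hx'₂
  have hx'₁ : x'₁ ≠ 0 := by intro h; rw [h] at h2; simp at h2
  have hy₁ : y₁ ≠ 0 := by intro h; rw [h] at h2; simp at h2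
  have hz₁ : z₁ ≠ 0 := by intro h; rw [h] at h2; simp at h2
  have h5 : x'₁ * (y'₁ * z₁) = 0 := by linear_combination e5 - (y'₂ * z₂) * hx'₂
  have hy'₁ : y'₁ = 0 := by
    rcases mul_eq_zero.mp h5 with h | h
    · exact absurd h hx'₁
    · rcases mul_eq_zero.mp h with h | h
      · exact h
      · exact absurd h hz₁
  have h6 : x'₁ * (y₁ * z'₁) = 0 := by linear_combination e6 - (y₂ * z'₂) * hx'₂
  have hz'₁ : z'₁ = 0 := by
    rcases mul_eq_zero.mp h6 with h | h
    · exact absurd h hx'₁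
    · rcases mul_eq_zero.mp h with h | h
      · exact absurd h hy₁
      · exact h
  have hy'₂ : y'₂ ≠ 0 := by
    intro h; apply hDy; rw [hy'₁, h]; ring
  have hz'₂ : z'₂ ≠ 0 := by
    intro h; apply hDz; rw [hz'₁, h]; ring
  have h7 : x₂ * (y'₂ * z'₂) = 0 := by linear_combination e7 - (x₁ * z'₁) * hy'₁
  exact (mul_ne_zero hx₂ (mul_ne_zero hy'₂ hz'₂)) h7

/-- The scalar contradiction: the 2×2×2 W-tensor has rank > 2. -/
lemma scalarKey {K : Type*} [Field K]
    (x₁ x₂ x'₁ x'₂ y₁ y₂ y'₁ y'₂ z₁ z₂ z'₁ z'₂ : K)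
    (e1 : x₁ * (y₁ * z₁) + x₂ * (y₂ * z₂) = 0)
    (e2 : x'₁ * (y₁ * z₁) + x'₂ * (y₂ * z₂) = 1)
    (e3 : x₁ * (y'₁ * z₁) + x₂ * (y'₂ * z₂) = 1)
    (e4 : x₁ * (y₁ * z'₁) + x₂ * (y₂ * z'₂) = 1)
    (e5 : x'₁ * (y'₁ * z₁) + x'₂ * (y'₂ * z₂) = 0)
    (e6 : x'₁ * (y₁ * z'₁) + x'₂ * (y₂ * z'₂) = 0)
    (e7 : x₁ * (y'₁ * z'₁) + x₂ * (y'₂ * z'₂) = 0)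
    (e8 : x'₁ * (y'₁ * z'₁) + x'₂ * (y'₂ * z'₂) = 0) : False := by
  have hdet0 : x₁ * x₂ * ((y₁ * y'₂ - y'₁ * y₂) * (z₁ * z'₂ - z'₁ * z₂)) = -1 := by
    linear_combination (x₁ * (y'₁ * z'₁) + x₂ * (y'₂ * z'₂)) * e1
      - (x₁ * (y'₁ * z₁) + x₂ * (y'₂ * z₂)) * e4 - e3
  have hne : x₁ * x₂ * ((y₁ * y'₂ - y'₁ * y₂) * (z₁ * z'₂ - z'₁ * z₂)) ≠ 0 := by
    rw [hdet0]; exact neg_ne_zero.mpr one_ne_zero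
  have hx₁ : x₁ ≠ 0 := fun h => hne (by rw [h]; ring)
  have hx₂ : x₂ ≠ 0 := fun h => hne (by rw [h]; ring)
  have hDy : y₁ * y'₂ - y'₁ * y₂ ≠ 0 := fun h => hne (by rw [h]; ring)
  have hDz : z₁ * z'₂ - z'₁ * z₂ ≠ 0 := fun h => hne (by rw [h]; ring)
  have hdet1 : x'₁ * x'₂ * ((y₁ * y'₂ - y'₁ * y₂) * (z₁ * z'₂ - z'₁ * z₂)) = 0 := by
    linear_combination (x'₁ * (y'₁ * z'₁) + x'₂ * (y'₂ * z'₂)) * e2 + e8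
      - (x'₁ * (y'₁ * z₁) + x'₂ * (y'₂ * z₂)) * e6
  have hx' : x'₁ = 0 ∨ x'₂ = 0 := by
    rcases mul_eq_zero.mp hdet1 with h | h
    · exact mul_eq_zero.mp h
    · exact absurd h (mul_ne_zero hDy hDz)
  rcases hx' with h | h
  · exact scalarAux x₂ x₁ x'₂ x'₁ y₂ y₁ y'₂ y'₁ z₂ z₁ z'₂ z'₁ hx₁
      (fun hc => hDy (by linear_combination -hc)) (fun hc => hDz (by linear_combination -hc)) h
      (by linear_combination e2) (by linear_combination e5)
      (by linear_combination e6) (by linear_combination e7)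
  · exact scalarAux x₁ x₂ x'₁ x'₂ y₁ y₂ y'₁ y'₂ z₁ z₂ z'₁ z'₂ hx₂ hDy hDz h e2 e5 e6 e7

/-- Swapping a linearly independent pair. -/
lemma pairSwap {K V : Type*} [Field K] [AddCommGroup V] [Module K V] {w v : V}
    (h : LinearIndependent K ![w, v]) : LinearIndependent K ![v, w] := by
  have h' := h.comp (Equiv.swap (0 : Fin 2) 1) (Equiv.injective _)
  have : (![w, v] ∘ Equiv.swap (0 : Fin 2) 1) = ![v, w] := by
    funext i; fin_cases i <;> simp [Equiv.swap_apply_def]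
  rwa [this] at h'

/-- A dual functional separating a linearly independent pair. -/
lemma existsDualPair {K V : Type*} [Field K] [AddCommGroup V] [Module K V] {w v : V}
    (h : LinearIndependent K ![w, v]) :
    ∃ f : Module.Dual K V, f w = 1 ∧ f v = 0 := by
  have hw : w ∉ Submodule.span K {v} := by
    rw [Submodule.mem_span_singleton]
    rintro ⟨a, ha⟩
    exact (linearIndependent_fin2.mp h).2 a ha
  obtain ⟨f, hf0, hfmap⟩ :=
    (Submodule.span K {v}).exists_dual_map_eq_bot_of_notMem hw inferInstance
  have hfv : f v = 0 := by
    have : f v ∈ (Submodule.span K {v}).map f :=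
      Submodule.mem_map_of_mem (Submodule.mem_span_singleton_self v)
    rw [hfmap] at this
    simpa using this
  refine ⟨(f w)⁻¹ • f, ?_, ?_⟩
  · simp [inv_mul_cancel₀ hf0]
  · simp [hfv]

/-- Trilinear evaluation of a tensor against three dual functionals. -/
noncomputable def triEval {K V₁ V₂ V₃ : Type*} [Field K]
    [AddCommGroup V₁] [Module K V₁] [AddCommGroup V₂] [Module K V₂]
    [AddCommGroup V₃] [Module K V₃]
    (f : Module.Dual K V₁) (g : Module.Dual K V₂) (h : Module.Dual K V₃) :
    V₁ ⊗[K] (V₂ ⊗[K] V₃) →ₗ[K] K :=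
  TensorProduct.lift ((LinearMap.mul K K).compl₁₂ f
    (TensorProduct.lift ((LinearMap.mul K K).compl₁₂ g h)))

@[simp] lemma triEval_tmul {K V₁ V₂ V₃ : Type*} [Field K]
    [AddCommGroup V₁] [Module K V₁] [AddCommGroup V₂] [Module K V₂]
    [AddCommGroup V₃] [Module K V₃]
    (f : Module.Dual K V₁) (g : Module.Dual K V₂) (h : Module.Dual K V₃)
    (a : V₁) (b : V₂) (c : V₃) :
    triEval f g h (a ⊗ₜ[K] (b ⊗ₜ[K] c)) = f a * (g b * h c) := by
  simp [triEval]

/-- The W tensor is not a sum of two decomposable tensors. -/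
lemma keyLemma {K V₁ V₂ V₃ : Type*} [Field K]
    [AddCommGroup V₁] [Module K V₁] [AddCommGroup V₂] [Module K V₂]
    [AddCommGroup V₃] [Module K V₃]
    (w₁ v₁ : V₁) (w₂ v₂ : V₂) (w₃ v₃ : V₃)
    (h1 : LinearIndependent K ![w₁, v₁]) (h2 : LinearIndependent K ![w₂, v₂])
    (h3 : LinearIndependent K ![w₃, v₃])
    (a₁ a₂ : V₁) (b₁ b₂ : V₂) (c₁ c₂ : V₃)
    (heq : v₁ ⊗ₜ[K] (w₂ ⊗ₜ[K] w₃) + w₁ ⊗ₜ[K] (v₂ ⊗ₜ[K] w₃) + w₁ ⊗ₜ[K] (w₂ ⊗ₜ[K] v₃)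
      = a₁ ⊗ₜ[K] (b₁ ⊗ₜ[K] c₁) + a₂ ⊗ₜ[K] (b₂ ⊗ₜ[K] c₂)) : False := by
  obtain ⟨fw, hfw1, hfw2⟩ := existsDualPair h1
  obtain ⟨fv, hfv1, hfv2⟩ := existsDualPair (pairSwap h1)
  obtain ⟨gw, hgw1, hgw2⟩ := existsDualPair h2
  obtain ⟨gv, hgv1, hgv2⟩ := existsDualPair (pairSwap h2)
  obtain ⟨hw, hhw1, hhw2⟩ := existsDualPair h3
  obtain ⟨hv, hhv1, hhv2⟩ := existsDualPair (pairSwap h3)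
  have E : ∀ (f : Module.Dual K V₁) (g : Module.Dual K V₂) (h : Module.Dual K V₃),
      f v₁ * (g w₂ * h w₃) + f w₁ * (g v₂ * h w₃) + f w₁ * (g w₂ * h v₃)
        = f a₁ * (g b₁ * h c₁) + f a₂ * (g b₂ * h c₂) := by
    intro f g h
    have := congrArg (triEval f g h) heq
    simpa using this
  refine scalarKey (fw a₁) (fw a₂) (fv a₁) (fv a₂) (gw b₁) (gw b₂) (gv b₁) (gv b₂)
    (hw c₁) (hw c₂) (hv c₁) (hv c₂) ?_ ?_ ?_ ?_ ?_ ?_ ?_ ?_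
  · simpa [hfw1, hfw2, hgw1, hgw2, hhw1, hhw2] using (E fw gw hw).symm
  · simpa [hfv1, hfv2, hgw1, hgw2, hhw1, hhw2] using (E fv gw hw).symm
  · simpa [hfw1, hfw2, hgv1, hgv2, hhw1, hhw2] using (E fw gv hw).symm
  · simpa [hfw1, hfw2, hgw1, hgw2, hhv1, hhv2] using (E fw gw hv).symm
  · simpa [hfv1, hfv2, hgv1, hgv2, hhw1, hhw2] using (E fv gv hw).symm
  · simpa [hfv1, hfv2, hgw1, hgw2, hhv1, hhv2] using (E fv gw hv).symm
  · simpa [hfw1, hfw2, hgv1, hgv2, hhv1, hhv2] using (E fw gv hv).symm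
  · simpa [hfv1, hfv2, hgv1, hgv2, hhv1, hhv2] using (E fv gv hv).symm

/-- for d = 3 the tangent tensor
v₁⊗w₂⊗w₃ + w₁⊗v₂⊗w₃ + w₁⊗w₂⊗v₃ has tensor rank exactly 3. -/
theorem stmt4 {K V₁ V₂ V₃ : Type*} [Field K] [IsAlgClosed K] [CharZero K]
    [AddCommGroup V₁] [Module K V₁] [FiniteDimensional K V₁]
    [AddCommGroup V₂] [Module K V₂] [FiniteDimensional K V₂]
    [AddCommGroup V₃] [Module K V₃] [FiniteDimensional K V₃]
    (w₁ v₁ : V₁) (w₂ v₂ : V₂) (w₃ v₃ : V₃)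
    (hw₁ : w₁ ≠ 0) (hw₂ : w₂ ≠ 0) (hw₃ : w₃ ≠ 0)
    (h1 : LinearIndependent K ![w₁, v₁]) (h2 : LinearIndependent K ![w₂, v₂])
    (h3 : LinearIndependent K ![w₃, v₃]) :
    tensorRank3 (v₁ ⊗ₜ[K] (w₂ ⊗ₜ[K] w₃) + w₁ ⊗ₜ[K] (v₂ ⊗ₜ[K] w₃)
      + w₁ ⊗ₜ[K] (w₂ ⊗ₜ[K] v₃)) = 3 := by
  have hmem : 3 ∈ {r | ∃ (a : Fin r → V₁) (b : Fin r → V₂) (c : Fin r → V₃),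
      v₁ ⊗ₜ[K] (w₂ ⊗ₜ[K] w₃) + w₁ ⊗ₜ[K] (v₂ ⊗ₜ[K] w₃) + w₁ ⊗ₜ[K] (w₂ ⊗ₜ[K] v₃)
        = ∑ k, a k ⊗ₜ[K] (b k ⊗ₜ[K] c k)} := by
    exact ⟨![v₁, w₁, w₁], ![w₂, v₂, w₂], ![w₃, w₃, v₃], by
      simp [Fin.sum_univ_three]⟩
  have hlb : ∀ r ∈ {r | ∃ (a : Fin r → V₁) (b : Fin r → V₂) (c : Fin r → V₃),
      v₁ ⊗ₜ[K] (w₂ ⊗ₜ[K] w₃) + w₁ ⊗ₜ[K] (v₂ ⊗ₜ[K] w₃) + w₁ ⊗ₜ[K] (w₂ ⊗ₜ[K] v₃)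
        = ∑ k, a k ⊗ₜ[K] (b k ⊗ₜ[K] c k)}, 3 ≤ r := by
    rintro r ⟨a, b, c, hr⟩
    by_contra hlt
    push_neg at hlt
    interval_cases r
    · exact keyLemma w₁ v₁ w₂ v₂ w₃ v₃ h1 h2 h3 0 0 0 0 0 0 (by
        simpa using hr)
    · exact keyLemma w₁ v₁ w₂ v₂ w₃ v₃ h1 h2 h3 (a 0) 0 (b 0) 0 (c 0) 0 (by
        simpa [Fin.sum_univ_one] using hr)
    · exact keyLemma w₁ v₁ w₂ v₂ w₃ v₃ h1 h2 h3 (a 0) (a 1) (b 0) (b 1) (c 0) (c 1) (by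
        simpa [Fin.sum_univ_two] using hr)
  exact le_antisymm (Nat.sInf_le hmem) (le_csInf ⟨3, hmem⟩ hlb)
end

section
/- In C^2 ⊗ C^2 ⊗ C^2, the tensor W = v ⊗ w ⊗ w + w ⊗ v ⊗ w + w ⊗ w ⊗ v, where {w, v} is a basis, has tensor rank 3 but is a limit of tensors of rank 2 (e.g., W = lim_{t→0} (1/t)((w + t v)^{⊗3} − w^{⊗3})); hence tensor rank is not lower semicontinuous and border rank of W equals 2. -/
open scoped TensorProduct Topology

/-! If `T = ∑ₖ aₖ ⊗ bₖ ⊗ cₖ`, contracting the first factor with a functional `α` gives the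
`2 × 2` matrix `∑ₖ α(aₖ) bₖ cₖᵀ`, whose determinant is `α(a₀) α(a₁) det[b] det[c]`. For `W` this
slice is `!![α 1, α 0; α 0, 0]`, with determinant `-(α 0)²`. A two-term decomposition would
therefore write `-(α 0)²` as a constant times `α(a₀) α(a₁)`, forcing `a₀` and `a₁` onto the line
of `w`; but then the `v ⊗ w ⊗ w` coordinate of `T` vanishes, while that of `W` is `1`.
The limit is the Leibniz rule: the difference quotient is `W + t X + t² Y`. -/

open Filter Matrix TensorProduct

section Expansion

variable {R M₁ M₂ M₃ : Type*} [CommRing R] [AddCommGroup M₁] [Module R M₁]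
  [AddCommGroup M₂] [Module R M₂] [AddCommGroup M₃] [Module R M₃]

theorem tmul_tmul_add_smul_sub (a a' : M₁) (b b' : M₂) (c c' : M₃) (t : R) :
    (a + t • a') ⊗ₜ[R] ((b + t • b') ⊗ₜ[R] (c + t • c')) - a ⊗ₜ[R] (b ⊗ₜ[R] c) =
      t • (a' ⊗ₜ (b ⊗ₜ c) + a ⊗ₜ (b' ⊗ₜ c) + a ⊗ₜ (b ⊗ₜ c')) +
      t ^ 2 • (a' ⊗ₜ (b' ⊗ₜ c) + a' ⊗ₜ (b ⊗ₜ c') + a ⊗ₜ (b' ⊗ₜ c')) +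
      t ^ 3 • a' ⊗ₜ (b' ⊗ₜ c') := by
  simp only [add_tmul, tmul_add, ← smul_tmul', tmul_smul, smul_add, smul_smul]
  module

end Expansion

section Limit

variable {𝕜 : Type*} [Field 𝕜] [TopologicalSpace 𝕜] [IsTopologicalRing 𝕜]

theorem tendsto_dual_inv_smul_cubic {M : Type*} [AddCommGroup M] [Module 𝕜 M]
    (φ : Module.Dual 𝕜 M) (D X Y : M) :
    Tendsto (fun t : 𝕜 => φ (t⁻¹ • (t • D + t ^ 2 • X + t ^ 3 • Y))) (𝓝[≠] 0) (𝓝 (φ D)) := by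
  have hpoly : Continuous fun t : 𝕜 => φ D + t * φ X + t ^ 2 * φ Y := by fun_prop
  refine ((by simpa using hpoly.tendsto 0 : Tendsto _ _ _).mono_left nhdsWithin_le_nhds).congr' ?_
  filter_upwards [self_mem_nhdsWithin] with t (ht : t ≠ 0)
  simp only [smul_add, smul_smul, map_add, map_smul, smul_eq_mul]
  field_simp

variable {M₁ M₂ M₃ : Type*} [AddCommGroup M₁] [Module 𝕜 M₁] [AddCommGroup M₂] [Module 𝕜 M₂]
  [AddCommGroup M₃] [Module 𝕜 M₃]

theorem tendsto_dual_inv_smul_tmul_tmul_add_smul_sub (a a' : M₁) (b b' : M₂) (c c' : M₃)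
    (φ : Module.Dual 𝕜 (M₁ ⊗[𝕜] (M₂ ⊗[𝕜] M₃))) :
    Tendsto (fun t : 𝕜 => φ (t⁻¹ •
        ((a + t • a') ⊗ₜ[𝕜] ((b + t • b') ⊗ₜ[𝕜] (c + t • c')) - a ⊗ₜ[𝕜] (b ⊗ₜ[𝕜] c))))
      (𝓝[≠] 0) (𝓝 (φ (a' ⊗ₜ (b ⊗ₜ c) + a ⊗ₜ (b' ⊗ₜ c) + a ⊗ₜ (b ⊗ₜ c')))) := by
  simpa only [tmul_tmul_add_smul_sub] using tendsto_dual_inv_smul_cubic φ _ _ _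

end Limit

section Rank

variable {K V₁ V₂ V₃ : Type*} [Field K]
  [AddCommGroup V₁] [Module K V₁] [AddCommGroup V₂] [Module K V₂]
  [AddCommGroup V₃] [Module K V₃]

def IsSumOfPureTensors (T : V₁ ⊗[K] (V₂ ⊗[K] V₃)) (r : ℕ) : Prop :=
  ∃ (a : Fin r → V₁) (b : Fin r → V₂) (c : Fin r → V₃), T = ∑ k, a k ⊗ₜ[K] (b k ⊗ₜ[K] c k)

theorem IsSumOfPureTensors.mono {T : V₁ ⊗[K] (V₂ ⊗[K] V₃)} {r s : ℕ}
    (h : IsSumOfPureTensors T r) (hrs : r ≤ s) : IsSumOfPureTensors T s := by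
  obtain ⟨d, rfl⟩ := Nat.exists_eq_add_of_le hrs
  obtain ⟨a, b, c, rfl⟩ := h
  refine ⟨Fin.append a 0, Fin.append b 0, Fin.append c 0, ?_⟩
  simp [Fin.sum_univ_add]

theorem tensorRank3_eq_succ {T : V₁ ⊗[K] (V₂ ⊗[K] V₃)} {n : ℕ}
    (h : IsSumOfPureTensors T (n + 1)) (h' : ¬ IsSumOfPureTensors T n) :
    tensorRank3 T = n + 1 :=
  le_antisymm (Nat.sInf_le h) <| le_csInf ⟨_, h⟩ fun _ hr =>
    Nat.succ_le_of_lt <| lt_of_not_ge fun hrn => h' (IsSumOfPureTensors.mono hr hrn)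

end Rank

section Determinant

variable {n R : Type*} [Fintype n] [DecidableEq n] [CommRing R]

theorem sum_smul_vecMulVec_eq_transpose_mul_diagonal_mul (x : n → R) (B C : Matrix n n R) :
    ∑ k, x k • vecMulVec (B k) (C k) = Bᵀ * diagonal x * C := by
  ext i j
  simp [mul_apply, Matrix.sum_apply, vecMulVec_apply, diagonal_apply, mul_comm, mul_left_comm]

theorem det_sum_smul_vecMulVec (x : n → R) (B C : Matrix n n R) :
    (∑ k, x k • vecMulVec (B k) (C k)).det = B.det * (∏ k, x k) * C.det := by
  rw [sum_smul_vecMulVec_eq_transpose_mul_diagonal_mul, det_mul, det_mul, det_transpose,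
    det_diagonal]

end Determinant

theorem not_forall_sum_mul_mul_eq_w {K : Type*} [Field K] (A B C : Matrix (Fin 2) (Fin 2) K) :
    ¬ ∀ i j l : Fin 2, ∑ k, A k i * B k j * C k l = if (i : ℕ) + j + l = 1 then 1 else 0 := by
  intro h
  have hslice (α : Fin 2 → K) :
      (∑ i, α i * A 0 i) * (∑ i, α i * A 1 i) * (B.det * C.det) = -α 0 ^ 2 := by
    have hM : ∑ k, (∑ i, α i * A k i) • vecMulVec (B k) (C k) = !![α 1, α 0; α 0, 0] := by
      ext j l
      have h0 := h 0 j l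
      have h1 := h 1 j l
      fin_cases j <;> fin_cases l <;>
        simp [Fin.sum_univ_two, vecMulVec_apply] at h0 h1 ⊢ <;>
        linear_combination α 0 * h0 + α 1 * h1
    have := congrArg det hM
    rw [det_sum_smul_vecMulVec, det_fin_two_of, Fin.prod_univ_two] at this
    linear_combination this
  set D := B.det * C.det
  have h10 : A 0 0 * A 1 0 * D = -1 := by simpa using hslice ![1, 0]
  have h01 : A 0 1 * A 1 1 * D = 0 := by simpa using hslice ![0, 1]
  have h11 : (A 0 0 + A 0 1) * (A 1 0 + A 1 1) * D = -1 := by simpa using hslice ![1, 1]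
  -- `A 0 0 * A 1 1 * D` and `A 0 1 * A 1 0 * D` have sum `0` and product `-(A 0 1 * A 1 1 * D) = 0`.
  have hx : A 0 0 * A 1 1 * D = 0 :=
    pow_eq_zero_iff two_ne_zero |>.1 <| by
      linear_combination (A 0 0 * A 1 1 * D) * (h11 - h10 - h01) - (A 0 1 * A 1 1 * D) * h10 + h01
  have hy : A 0 1 * A 1 0 * D = 0 :=
    pow_eq_zero_iff two_ne_zero |>.1 <| by
      linear_combination (A 0 1 * A 1 0 * D) * (h11 - h10 - h01) - (A 0 1 * A 1 1 * D) * h10 + h01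
  have hA01 : A 0 1 = 0 := by linear_combination A 0 1 * h10 - A 0 0 * hy
  have hA11 : A 1 1 = 0 := by linear_combination A 1 1 * h10 - A 1 0 * hx
  simpa [Fin.sum_univ_two, hA01, hA11] using h 1 0 0

section Coordinates

variable {R M₁ M₂ M₃ : Type*} [CommSemiring R] [AddCommMonoid M₁] [Module R M₁]
  [AddCommMonoid M₂] [Module R M₂] [AddCommMonoid M₃] [Module R M₃]

theorem Module.Basis.tensorProduct_tensorProduct_repr_tmul_tmul {ι₁ ι₂ ι₃ : Type*}
    (b₁ : Module.Basis ι₁ R M₁) (b₂ : Module.Basis ι₂ R M₂) (b₃ : Module.Basis ι₃ R M₃)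
    (x : M₁) (y : M₂) (z : M₃) (i : ι₁) (j : ι₂) (l : ι₃) :
    (b₁.tensorProduct (b₂.tensorProduct b₃)).repr (x ⊗ₜ (y ⊗ₜ z)) (i, j, l) =
      b₁.repr x i * b₂.repr y j * b₃.repr z l := by
  simp only [Module.Basis.tensorProduct_repr_tmul_apply, smul_eq_mul]
  ring

end Coordinates

section WTensor

variable {K V₁ V₂ V₃ : Type*} [Field K]
  [AddCommGroup V₁] [Module K V₁] [AddCommGroup V₂] [Module K V₂]
  [AddCommGroup V₃] [Module K V₃]
  (e₁ : Module.Basis (Fin 2) K V₁) (e₂ : Module.Basis (Fin 2) K V₂)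
  (e₃ : Module.Basis (Fin 2) K V₃)

theorem not_isSumOfPureTensors_two :
    ¬ IsSumOfPureTensors (e₁ 1 ⊗ₜ[K] (e₂ 0 ⊗ₜ[K] e₃ 0) + e₁ 0 ⊗ₜ (e₂ 1 ⊗ₜ e₃ 0) +
      e₁ 0 ⊗ₜ (e₂ 0 ⊗ₜ e₃ 1)) 2 := by
  rintro ⟨a, b, c, h⟩
  refine not_forall_sum_mul_mul_eq_w (fun k => e₁.repr (a k)) (fun k => e₂.repr (b k))
    (fun k => e₃.repr (c k)) fun i j l => ?_
  have := congrArg (fun T => (e₁.tensorProduct (e₂.tensorProduct e₃)).repr T (i, j, l)) h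
  simp only [map_add, map_sum, Finsupp.add_apply, Finsupp.finsetSum_apply,
    Module.Basis.tensorProduct_tensorProduct_repr_tmul_tmul, Module.Basis.repr_self,
    Finsupp.single_apply] at this
  rw [← this]
  fin_cases i <;> fin_cases j <;> fin_cases l <;> simp

theorem tensorRank3_w :
    tensorRank3 (e₁ 1 ⊗ₜ[K] (e₂ 0 ⊗ₜ[K] e₃ 0) + e₁ 0 ⊗ₜ (e₂ 1 ⊗ₜ e₃ 0) +
      e₁ 0 ⊗ₜ (e₂ 0 ⊗ₜ e₃ 1)) = 3 :=
  tensorRank3_eq_succ ⟨![e₁ 1, e₁ 0, e₁ 0], ![e₂ 0, e₂ 1, e₂ 0], ![e₃ 0, e₃ 0, e₃ 1],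
    by simp [Fin.sum_univ_three]⟩ (not_isSumOfPureTensors_two e₁ e₂ e₃)

end WTensor

/-- in (ℂ²)^{⊗3} with basis {w, v}, the tensor
W = v⊗w⊗w + w⊗v⊗w + w⊗w⊗v is the limit as t → 0 of the rank-2 tensors
t⁻¹ ((w + t v)^{⊗3} − w^{⊗3}) (tested against every linear functional, which in
finite dimension is the usual topology), yet W itself has tensor rank 3. -/
theorem stmt18 {V : Type*} [AddCommGroup V] [Module ℂ V]
    (b : Module.Basis (Fin 2) ℂ V) (w v : V) (hw : w = b 0) (hv : v = b 1) :
    (∀ φ : Module.Dual ℂ (V ⊗[ℂ] (V ⊗[ℂ] V)),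
      Filter.Tendsto
        (fun t : ℂ => φ (t⁻¹ •
          ((w + t • v) ⊗ₜ[ℂ] ((w + t • v) ⊗ₜ[ℂ] (w + t • v)) - w ⊗ₜ[ℂ] (w ⊗ₜ[ℂ] w))))
        (𝓝[≠] (0 : ℂ))
        (𝓝 (φ (v ⊗ₜ[ℂ] (w ⊗ₜ[ℂ] w) + w ⊗ₜ[ℂ] (v ⊗ₜ[ℂ] w) + w ⊗ₜ[ℂ] (w ⊗ₜ[ℂ] v))))) ∧
    tensorRank3 (v ⊗ₜ[ℂ] (w ⊗ₜ[ℂ] w) + w ⊗ₜ[ℂ] (v ⊗ₜ[ℂ] w) + w ⊗ₜ[ℂ] (w ⊗ₜ[ℂ] v)) = 3 := by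
  subst hw hv
  exact ⟨tendsto_dual_inv_smul_tmul_tmul_add_smul_sub _ _ _ _ _ _, tensorRank3_w b b b⟩
end
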